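/- Let (γ,w) be an (n,mn)-parking function with dinv(γ,w) = 0. Then area(γ) = m·C(n,2) - n·des(w) + maj(w), where des(w) and maj(w) are the number of descents and the major index of the permutation w. -/

import Mathlib

open scoped Classical

inductive Step : Type
  | N | E | D
deriving DecidableEq, Repr

instance : Fintype Step :=
  ⟨{Step.N, Step.E, Step.D}, by intro x; cases x <;> simp⟩

open Step

/-- number of occurrences of the letter `s` in the word `w` -/
def cnt (s : Step) (w : List Step) : ℕ := w.count s

/-- Schröder (or Dyck, if no `D`s) path in an `n × n` grid: every prefix has at
least as many `N`s as `E`s, and the totals agree. -/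
def IsSchroeder (w : List Step) : Prop :=
  (∀ p : List Step, p <+: w → cnt E p ≤ cnt N p) ∧ cnt N w = cnt E w

/-- words that are concatenations of blocks `NE` and `D` -/
inductive IsNED : List Step → Prop
  | nil : IsNED []
  | ne {w} : IsNED w → IsNED (N :: E :: w)
  | d {w} : IsNED w → IsNED (D :: w)

/-- area of a Schröder path: the number of lower triangles between the path and the
main diagonal, computed as the sum over `N` and `D` steps of the height
`#N - #E` of the starting point of the step above the diagonal. -/
def areaAux : ℕ → List Step → ℕ
  | _, [] => 0
  | h, N :: w => h + areaAux (h+1) w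
  | h, D :: w => h + areaAux h w
  | h, E :: w => areaAux (h-1) w

def area (w : List Step) : ℕ := areaAux 0 w

/-- area of an `N/E` lattice path in a rectangular grid: the number of boxes under
the path, i.e. the sum over `E` steps of the number of `N` steps before it. -/
def areaNEAux : ℕ → List Step → ℕ
  | _, [] => 0
  | h, N :: w => areaNEAux (h+1) w
  | h, E :: w => h + areaNEAux h w
  | h, D :: w => areaNEAux h w

def areaNE (w : List Step) : ℕ := areaNEAux 0 w

/-- number of `N`s occurring before the `(j+1)`-st `E` (`j` is 0-indexed);
this is the height of the path above the horizontal interval `[j, j+1]`. -/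
def nBefore : List Step → ℕ → ℕ
  | [], _ => 0
  | N :: w, j => 1 + nBefore w j
  | E :: w, j => if j = 0 then 0 else nBefore w (j-1)
  | D :: w, j => nBefore w j

/-- number of `E`s occurring before the `(i+1)`-st `N` (`i` is 0-indexed). -/
def eBefore : List Step → ℕ → ℕ
  | [], _ => 0
  | E :: w, i => 1 + eBefore w i
  | N :: w, i => if i = 0 then 0 else eBefore w (i-1)
  | D :: w, i => eBefore w i

/-- number of `D`s occurring after the `e`-th `E` (`e` is 1-indexed). -/
def dAfterE : List Step → ℕ → ℕ
  | [], _ => 0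
  | E :: w, e => if e ≤ 1 then cnt D w else dAfterE w (e-1)
  | D :: w, e => dAfterE w e
  | N :: w, e => dAfterE w e

/-- Combined computation of `bounce(Γ(γ)) + numph(γ)` along the bounce path of
`Γ(γ)`.  Here `g` is the Schröder path, `w = Γ(g)` is the underlying Dyck path,
`nn` its size; the bounce path has corners (peaks) at the positions
`j₀ = 0, jₖ₊₁ = nBefore w jₖ`; each intermediate return `jₖ₊₁ < nn` contributes
`nn - jₖ₊₁` to the bounce of `Γ(g)`, and the peak with corner at `jₖ` is the start
of the `(jₖ+1)`-st east step, contributing to numph the number of diagonal steps of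
`g` above it, i.e. after that east step. -/
def bounceAux (g w : List Step) (nn : ℕ) : ℕ → ℕ → ℕ
  | 0, _ => 0
  | fuel+1, j =>
      dAfterE g (j+1) +
        (if nn ≤ nBefore w j ∨ nBefore w j ≤ j then 0
         else (nn - nBefore w j) + bounceAux g w nn fuel (nBefore w j))

/-- the bounce statistic of a Schröder path: `bounce(Γ(γ)) + numph(γ)` -/
def bounce (g : List Step) : ℕ :=
  let w := g.filter (fun s => s ≠ D)
  let nn := cnt E w
  if nn = 0 then 0 else bounceAux g w nn g.length 0

/-- the (signed) area coordinate `a_i = m·i - (#E before the (i+1)-st N)` of line `i`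
(0-indexed) for a path in an `n × mn` grid. -/
def aLine (m : ℕ) (g : List Step) (i : ℕ) : ℤ := (m : ℤ) * i - eBefore g i

/-- an `(n, mn)`-Dyck path: `n` north steps, `mn` east steps, no diagonal steps,
staying weakly above the main diagonal. -/
def IsParkingPath (n m : ℕ) (g : List Step) : Prop :=
  (∀ s ∈ g, s ≠ D) ∧ cnt N g = n ∧ cnt E g = m * n ∧
    ∀ p : List Step, p <+: g → cnt E p ≤ m * cnt N p

/-- an `(n, mn)`-parking function: an `(n,mn)`-Dyck path labelled by a permutation
`w` of `{0, …, n-1}` whose labels increase within each column. -/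
def IsParking (n m : ℕ) (g : List Step) (w : Fin n → Fin n) : Prop :=
  IsParkingPath n m g ∧ Function.Bijective w ∧
    ∀ i j : Fin n, (j : ℕ) = (i : ℕ) + 1 → eBefore g (i : ℕ) = eBefore g (j : ℕ) → w i < w j

/-- the diagonal inversion statistic of an `(n, mn)`-parking function -/
def dinv (n m : ℕ) (g : List Step) (w : Fin n → Fin n) : ℤ :=
  ∑ i : Fin n, ∑ j : Fin n,
    if (i : ℕ) < (j : ℕ) then
      (if w i < w j then max 0 ((m : ℤ) - |aLine m g (i : ℕ) - aLine m g (j : ℕ)|) else 0) +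
        (if w j < w i then max 0 ((m : ℤ) - |aLine m g (j : ℕ) - aLine m g (i : ℕ) + 1|) else 0)
    else 0

/-- the number of descents of the word `w` -/
def desNum (n : ℕ) (w : Fin n → Fin n) : ℕ :=
  ((Finset.range (n-1)).filter fun i =>
    ∃ hj : i + 1 < n, w ⟨i+1, hj⟩ < w ⟨i, Nat.lt_of_succ_lt hj⟩).card

/-- the major index of the word `w` (with positions 1-indexed as usual) -/
def majStat (n : ℕ) (w : Fin n → Fin n) : ℕ :=
  ∑ i ∈ (Finset.range (n-1)).filter (fun i =>
    ∃ hj : i + 1 < n, w ⟨i+1, hj⟩ < w ⟨i, Nat.lt_of_succ_lt hj⟩), (i+1)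

/-- the reading word of a labelled path in an `n × mn` grid: labels are read along
diagonals parallel to the main diagonal, starting with the farthest diagonal,
each diagonal being read from top-right to bottom-left. -/
def readWord (n m : ℕ) (g : List Step) (lab : ℕ → ℕ) : List ℕ :=
  ((List.range (m * n + 1)).map fun k =>
    (((List.range n).reverse.filter fun i => aLine m g i = (m * n : ℤ) - k).map lab)).flatten

/-- the labelling function `ℕ → ℕ` associated to a permutation of `Fin n` -/
def labOf {n : ℕ} (w : Fin n → Fin n) : ℕ → ℕ :=
  fun i => if h : i < n then (w ⟨i, h⟩ : ℕ) else 0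

/-- one step of the algorithm `φ`, on the reversed word: find the rightmost
(i.e. first in the reversed word) east step not followed by an east step,
and swap it with the letter following it. -/
def phiRevAux : List Step → List Step
  | a :: E :: t => if a ≠ E then E :: a :: t else a :: phiRevAux (E :: t)
  | a :: t => a :: phiRevAux t
  | [] => []

/-- one step of the algorithm `φ` -/
def phiStep (w : List Step) : List Step := (phiRevAux w.reverse).reverse

/-- the sequence `φ(γ) = (γ₀, γ₁, …, γ_{bounce γ})` produced by the algorithm -/
def phiSeq (g : List Step) : List (List Step) :=
  (List.range (bounce g + 1)).map fun i => phiStep^[i] g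

/-- the union of all sequences `φ(γ)` over area-0 Schröder paths with `n` blocks -/
def phiUniv (n : ℕ) : Set (List Step) :=
  {p | ∃ g, IsNED g ∧ cnt N g + cnt D g = n ∧ p ∈ phiSeq g}

/-- the map replacing each block `NE` by `N` and each `D` by `E` -/
def theta : List Step → List Step
  | N :: E :: w => N :: theta w
  | D :: w => E :: theta w
  | _ :: w => theta w
  | [] => []

/-- the cells of the hook-shaped Young diagram `(d, 1^{n-d})` (row 0 is the arm). -/
def hookCells (n d : ℕ) : Finset (ℕ × ℕ) :=
  ((Finset.range d).image fun c => ((0 : ℕ), c)) ∪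
    ((Finset.range (n - d + 1)).image fun r => (r, (0 : ℕ)))

/-- a standard Young tableau of hook shape `(d, 1^{n-d})`: `pos i` is the cell
`(row, column)` containing the entry `i+1`; entries increase along rows and columns. -/
structure HookSYT (n d : ℕ) where
  pos : Fin n → ℕ × ℕ
  mem : ∀ i, pos i ∈ hookCells n d
  inj : Function.Injective pos
  rowInc : ∀ i j : Fin n, (pos i).1 = (pos j).1 → (pos i).2 < (pos j).2 → i < j
  colInc : ∀ i j : Fin n, (pos i).2 = (pos j).2 → (pos i).1 < (pos j).1 → i < j

/-- the descent set of a standard Young tableau: entries `i ∈ {1, …, n-1}` such that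
the entry `i+1` lies in a strictly higher row than `i`. -/
def Des {n d : ℕ} (τ : HookSYT n d) : Finset ℕ :=
  (Finset.Icc 1 (n-1)).filter fun i =>
    ∃ hi : i < n, ∃ hi' : i - 1 < n, (τ.pos ⟨i - 1, hi'⟩).1 < (τ.pos ⟨i, hi⟩).1

/-- the major index of a standard Young tableau -/
def majT {n d : ℕ} (τ : HookSYT n d) : ℕ := ∑ i ∈ Des τ, i

/-- the number of descents of a standard Young tableau -/
def desT {n d : ℕ} (τ : HookSYT n d) : ℕ := (Des τ).card

/-- the maximum of the descent set -/
def maxDes {n d : ℕ} (τ : HookSYT n d) : ℕ := (Des τ).sup id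

/-- the map `M_{n,d}`: the path `γ₁γ₂⋯γₙ` with `γₙ = NE`, `γ_{n-i} = NE` if
`i ∈ Des τ` and `γ_{n-i} = D` otherwise -/
def Mmap (n d : ℕ) (τ : HookSYT n d) : List Step :=
  (((List.range n).map fun j =>
    if j = n - 1 then [N, E]
    else if (n - 1 - j) ∈ Des τ then [N, E] else [D])).flatten

/-- the map `S_{n,d}`: the path `γ₁⋯γ_{n-1}` with `γ_{n-i} = NNEE` if
`i = max Des τ` and `1 ∈ Des τ`, `γ_{n-i} = NDE` if `i = max Des τ` and
`1 ∉ Des τ`, `γ_{n-i} = NE` if `i = 1` or `i ∈ Des τ ∖ {max Des τ}`, and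
`γ_{n-i} = D` otherwise. -/
def Smap (n d : ℕ) (τ : HookSYT n d) : List Step :=
  (((List.range (n-1)).map fun j =>
    if (n - 1 - j) = maxDes τ then (if 1 ∈ Des τ then [N,N,E,E] else [N,D,E])
    else if (n - 1 - j) = 1 ∨ (n - 1 - j) ∈ Des τ then [N,E] else [D])).flatten

/-- the set `V_{n,d}` of Schröder paths of the form `Dʲ NNEE u` or `Dʲ NDE u`
with `u ∈ {NE,D}* NE`, having `n-d+1` north steps and `d-1` diagonal steps. -/
def Vset (n d : ℕ) : Set (List Step) :=
  {g | (∃ j u, IsNED u ∧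
      (g = List.replicate j D ++ [N,N,E,E] ++ (u ++ [N,E]) ∨
       g = List.replicate j D ++ [N,D,E] ++ (u ++ [N,E]))) ∧
     cnt N g = n - d + 1 ∧ cnt D g = d - 1}

/-- Schröder paths in an `n × n` grid with `dd` diagonal steps, area `a`,
ending with `NE` -/
def SchT (n dd a : ℕ) : Set (List Step) :=
  {g | IsSchroeder g ∧ cnt D g = dd ∧ cnt N g = n - dd ∧ area g = a ∧ ∃ u, g = u ++ [N, E]}

/-- the 'upper' forms: `Dʲ NNEE γ' NE NE` or `γ' NE Dʲ NNEE γ''` -/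
def UpperForm (g : List Step) : Prop :=
  (∃ j u, IsNED u ∧ g = List.replicate j D ++ [N,N,E,E] ++ u ++ [N,E,N,E]) ∨
  (∃ u j v, IsNED u ∧ g = u ++ [N,E] ++ List.replicate j D ++ [N,N,E,E] ++ v)

/-- the 'lower' forms: `Dʲ NNEE γ' D NE` or `γ' NDE Dʲ NE γ''` -/
def LowerForm (g : List Step) : Prop :=
  (∃ j u, IsNED u ∧ g = List.replicate j D ++ [N,N,E,E] ++ u ++ [D,N,E]) ∨
  (∃ u j v, IsNED u ∧ g = u ++ [N,D,E] ++ List.replicate j D ++ [N,E] ++ v)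

/-- the number of distinct columns of the path -/
def Tcols (n : ℕ) (g : List Step) : ℕ :=
  ((Finset.range n).image fun i => eBefore g i).card

/-- the `q`-integer `[k]_q = 1 + q + ⋯ + q^{k-1}` as a polynomial -/
noncomputable def qInt (k : ℕ) : Polynomial ℤ := ∑ i ∈ Finset.range k, Polynomial.X ^ i

/-- the `q`-factorial `[k]!_q` -/
noncomputable def qFact (k : ℕ) : Polynomial ℤ := ∏ i ∈ Finset.range k, qInt (i+1)

/-!
Let `e i` be the number of east steps below the `(i+1)`-st north step, so that
`a_i = aLine m g i = m * i - e i`. When `dinv = 0`, the gap `e (i+1) - e i` is `1` at a descent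
of `w` and `0` otherwise. A gap `0` at a descent contradicts the column condition, and a gap `1`
at an ascent gives `a_i - a_{i+1} = 1 - m`, which contributes to `dinv`. For a gap `≥ 2`, one
shows by descending induction on `k ≤ i` that `a_k - a_{i+1} ≥ m`, with equality only if
`w_k < w_{i+1}`: from `k + 1` to `k` the difference drops by `m`, or by `m - 1` at a descent, and
the dinv conditions for the pair `(k, i+1)` forbid it to fall below `m`. At `k = 0` this
contradicts the Dyck condition `e (i+1) ≤ m (i+1)`. Hence `e i` counts the descents before `i`,
and summing gives `∑ e i = ∑_{descents j} (n - 1 - j) = n·des - maj`.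
-/

open Finset

theorem eBefore_le_eBefore_succ : ∀ (g : List Step) (i : ℕ), eBefore g i ≤ eBefore g (i + 1)
  | [], _ => le_rfl
  | N :: _, 0 => by simp [eBefore]
  | N :: t, i + 1 => by simpa [eBefore] using eBefore_le_eBefore_succ t i
  | E :: t, i => by simpa [eBefore] using eBefore_le_eBefore_succ t i
  | D :: t, i => by simpa [eBefore] using eBefore_le_eBefore_succ t i

theorem eBefore_le_of_forall_prefix (m : ℕ) : ∀ {g : List Step} {c : ℕ},
    (∀ p, p <+: g → cnt E p ≤ c + m * cnt N p) → ∀ {i}, i < cnt N g → eBefore g i ≤ c + m * i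
  | [], _, _, _, hi => by simp [cnt] at hi
  | N :: _, _, _, 0, _ => by simp [eBefore]
  | N :: t, c, h, i + 1, hi => by
    have ih := eBefore_le_of_forall_prefix m (g := t) (c := c + m) (i := i)
      (fun p hp => by
        have := h (N :: p) (List.cons_prefix_cons.2 ⟨rfl, hp⟩)
        simp only [cnt, List.count_cons_self, List.count_cons_of_ne (by decide : N ≠ E)] at this ⊢
        linarith [mul_add m (p.count N) 1])
      (by simpa [cnt] using hi)
    simp only [eBefore, Nat.add_one_ne_zero, if_false, Nat.add_sub_cancel]
    linarith [mul_add m i 1]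
  | E :: t, c, h, i, hi => by
    have hc : 1 ≤ c := by simpa [cnt] using h [E] (List.prefix_cons_inj _ |>.2 List.nil_prefix)
    have ih := eBefore_le_of_forall_prefix m (g := t) (c := c - 1) (i := i)
      (fun p hp => by
        have := h (E :: p) (List.cons_prefix_cons.2 ⟨rfl, hp⟩)
        simp only [cnt, List.count_cons_self, List.count_cons_of_ne (by decide : E ≠ N)] at this ⊢
        omega)
      (by simpa [cnt] using hi)
    simp only [eBefore]
    omega
  | D :: t, c, h, i, hi =>
    eBefore_le_of_forall_prefix m (g := t)
      (fun p hp => by simpa [cnt] using h (D :: p) (List.cons_prefix_cons.2 ⟨rfl, hp⟩))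
      (by simpa [cnt] using hi)

theorem aLine_sub_aLine_succ (m : ℕ) (g : List Step) (k : ℕ) :
    aLine m g k - aLine m g (k + 1) = (eBefore g (k + 1) : ℤ) - eBefore g k - m := by
  simp only [aLine]
  push_cast
  ring

theorem labOf_lt_labOf_iff {n : ℕ} (w : Fin n → Fin n) {a b : ℕ} (ha : a < n) (hb : b < n) :
    labOf w a < labOf w b ↔ w ⟨a, ha⟩ < w ⟨b, hb⟩ := by
  simp only [labOf, dif_pos ha, dif_pos hb]
  rfl

theorem labOf_injOn {n : ℕ} {w : Fin n → Fin n} (hw : Function.Injective w) :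
    Set.InjOn (labOf w) (Set.Iio n) := by
  intro a ha b hb hab
  simp only [Set.mem_Iio] at ha hb
  exact congrArg Fin.val (hw (Fin.ext (by simpa [labOf, ha, hb] using hab)))

namespace IsParking

variable {n m : ℕ} {g : List Step} {w : Fin n → Fin n}

theorem eBefore_le (hpark : IsParking n m g w) {i : ℕ} (hi : i < n) : eBefore g i ≤ m * i := by
  obtain ⟨⟨-, hN, -, hpre⟩, -⟩ := hpark
  simpa using eBefore_le_of_forall_prefix m (c := 0) (by simpa using hpre) (hN ▸ hi)

theorem labOf_lt_labOf_succ (hpark : IsParking n m g w) {i : ℕ} (hi : i + 1 < n)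
    (he : eBefore g i = eBefore g (i + 1)) : labOf w i < labOf w (i + 1) :=
  (labOf_lt_labOf_iff w _ hi).2 (hpark.2.2 ⟨i, by omega⟩ ⟨i + 1, hi⟩ rfl he)

theorem labOf_ne (hpark : IsParking n m g w) {a b : ℕ} (ha : a < n) (hb : b < n) (hab : a ≠ b) :
    labOf w a ≠ labOf w b :=
  fun h => hab (labOf_injOn hpark.2.1.1 ha hb h)

end IsParking

section DinvZero

variable {n m : ℕ} {g : List Step} {w : Fin n → Fin n}

theorem le_abs_aLine_sub_of_dinv_eq_zero (hdinv : dinv n m g w = 0) {i j : Fin n}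
    (hij : (i : ℕ) < j) :
    (w i < w j → (m : ℤ) ≤ |aLine m g i - aLine m g j|) ∧
      (w j < w i → (m : ℤ) ≤ |aLine m g j - aLine m g i + 1|) := by
  rw [dinv, sum_eq_zero_iff_of_nonneg fun _ _ => sum_nonneg fun _ _ => by
    split_ifs <;> positivity] at hdinv
  have hij0 := (sum_eq_zero_iff_of_nonneg fun _ _ => by split_ifs <;> positivity).1
    (hdinv i (mem_univ i)) j (mem_univ j)
  rw [if_pos hij] at hij0
  constructor <;> intro hw
  · simpa only [if_pos hw, if_neg (lt_asymm hw), add_zero, max_eq_left_iff, sub_nonpos] using hij0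
  · simpa only [if_pos hw, if_neg (lt_asymm hw), zero_add, max_eq_left_iff, sub_nonpos] using hij0

theorem le_abs_aLine_sub_of_labOf_lt (hdinv : dinv n m g w = 0) {a b : ℕ} (hab : a < b)
    (hb : b < n) (hv : labOf w a < labOf w b) : (m : ℤ) ≤ |aLine m g a - aLine m g b| :=
  (le_abs_aLine_sub_of_dinv_eq_zero (i := ⟨a, by omega⟩) (j := ⟨b, hb⟩) hdinv hab).1
    ((labOf_lt_labOf_iff w _ _).1 hv)

theorem le_abs_aLine_sub_add_one_of_labOf_lt (hdinv : dinv n m g w = 0) {a b : ℕ} (hab : a < b)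
    (hb : b < n) (hv : labOf w b < labOf w a) : (m : ℤ) ≤ |aLine m g b - aLine m g a + 1| :=
  (le_abs_aLine_sub_of_dinv_eq_zero (i := ⟨a, by omega⟩) (j := ⟨b, hb⟩) hdinv hab).2
    ((labOf_lt_labOf_iff w _ _).1 hv)

theorem eBefore_succ_le_add_one (hm : 1 ≤ m) (hpark : IsParking n m g w)
    (hdinv : dinv n m g w = 0) {i : ℕ} (hi : i + 1 < n)
    (hsteps : ∀ k < i,
      eBefore g (k + 1) = eBefore g k + if labOf w (k + 1) < labOf w k then 1 else 0) :
    eBefore g (i + 1) ≤ eBefore g i + 1 := by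
  by_contra! hbig
  have hdiff_ge : ∀ k ≤ i, (m : ℤ) ≤ aLine m g k - aLine m g (i + 1) ∧
      (aLine m g k - aLine m g (i + 1) = m → labOf w k < labOf w (i + 1)) := by
    intro k hk
    induction hk using Nat.decreasingInduction with
    | self =>
      have hdiff := aLine_sub_aLine_succ m g i
      rcases (hpark.labOf_ne (a := i) (by omega) hi (by omega)).lt_or_gt with hv | hv
      · have := le_abs'.1 (le_abs_aLine_sub_of_labOf_lt hdinv (by omega) hi hv)
        omega
      · have := le_abs'.1 (le_abs_aLine_sub_add_one_of_labOf_lt hdinv (by omega) hi hv)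
        omega
    | of_succ k hk ih =>
      have hdiff := aLine_sub_aLine_succ m g k
      have hstep := hsteps k hk
      rcases (hpark.labOf_ne (a := k) (by omega) hi (by omega)).lt_or_gt with hv | hv
      · have := le_abs'.1 (le_abs_aLine_sub_of_labOf_lt hdinv (by omega) hi hv)
        split_ifs at hstep <;> omega
      · have := le_abs'.1 (le_abs_aLine_sub_add_one_of_labOf_lt hdinv (by omega) hi hv)
        have hne := hpark.labOf_ne (a := k) (b := k + 1) (by omega) (by omega) (by omega)
        split_ifs at hstep <;> omega
  have h0 := (hdiff_ge 0 (Nat.zero_le i)).1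
  have hbound : (eBefore g (i + 1) : ℤ) ≤ m * (i + 1 : ℕ) := mod_cast hpark.eBefore_le hi
  simp only [aLine, Nat.cast_zero, mul_zero, zero_sub] at h0
  linarith [(eBefore g 0).cast_nonneg (α := ℤ)]

theorem eBefore_succ (hm : 1 ≤ m) (hpark : IsParking n m g w) (hdinv : dinv n m g w = 0)
    (i : ℕ) (hi : i + 1 < n) :
    eBefore g (i + 1) = eBefore g i + if labOf w (i + 1) < labOf w i then 1 else 0 := by
  induction i using Nat.strong_induction_on with
  | _ i ih =>
    have hupper := eBefore_succ_le_add_one hm hpark hdinv hi fun k hk => ih k hk (by omega)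
    have hlower := eBefore_le_eBefore_succ g i
    have hne := hpark.labOf_ne (a := i) (b := i + 1) (by omega) hi (by omega)
    split_ifs with hdes
    · have := mt (hpark.labOf_lt_labOf_succ hi) (lt_asymm hdes)
      omega
    · have hasc := le_abs'.1 (le_abs_aLine_sub_of_labOf_lt hdinv i.lt_add_one hi (by omega))
      have := aLine_sub_aLine_succ m g i
      omega

theorem eBefore_eq_sum (hm : 1 ≤ m) (hpark : IsParking n m g w) (hdinv : dinv n m g w = 0) :
    ∀ i < n, eBefore g i = ∑ k ∈ range i, if labOf w (k + 1) < labOf w k then 1 else 0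
  | 0, hn => by simpa using hpark.eBefore_le hn
  | i + 1, hi => by
    rw [eBefore_succ hm hpark hdinv i hi, sum_range_succ,
      eBefore_eq_sum hm hpark hdinv i (by omega)]

end DinvZero

theorem sum_range_sum_range_ite_add_sum_filter (n : ℕ) (p : ℕ → Prop) [DecidablePred p] :
    ∑ i ∈ range n, ∑ k ∈ range i, (if p k then 1 else 0) +
        ∑ k ∈ (range (n - 1)).filter p, (k + 1) = n * #((range (n - 1)).filter p) := by
  have hswap : ∑ i ∈ range n, ∑ k ∈ range i, (if p k then 1 else 0)
      = ∑ k ∈ range (n - 1), ∑ _i ∈ Ioo k n, (if p k then 1 else 0) :=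
    sum_comm' fun i k => by simp only [mem_range, mem_Ioo]; omega
  rw [hswap, sum_filter, card_filter, mul_sum, ← sum_add_distrib]
  refine sum_congr rfl fun k hk => ?_
  rw [mem_range] at hk
  split_ifs <;> simp only [sum_const, Nat.card_Ioo, smul_eq_mul] <;> omega

theorem filter_range_descents_eq (n : ℕ) (w : Fin n → Fin n) :
    (range (n - 1)).filter
        (fun i => ∃ hj : i + 1 < n, w ⟨i + 1, hj⟩ < w ⟨i, Nat.lt_of_succ_lt hj⟩) =
      (range (n - 1)).filter fun i => labOf w (i + 1) < labOf w i := by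
  refine filter_congr fun i hi => ?_
  have hj : i + 1 < n := by rw [mem_range] at hi; omega
  exact ⟨fun ⟨_, h⟩ => (labOf_lt_labOf_iff w _ _).2 h,
    fun h => ⟨hj, (labOf_lt_labOf_iff w _ _).1 h⟩⟩

theorem desNum_eq_card_filter (n : ℕ) (w : Fin n → Fin n) :
    desNum n w = #((range (n - 1)).filter fun i => labOf w (i + 1) < labOf w i) := by
  rw [desNum, filter_range_descents_eq]

theorem majStat_eq_sum_filter (n : ℕ) (w : Fin n → Fin n) :
    majStat n w =
      ∑ i ∈ (range (n - 1)).filter (fun i => labOf w (i + 1) < labOf w i), (i + 1) := by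
  rw [majStat, filter_range_descents_eq]

/-- If an `(n,mn)`-parking function has `dinv(γ,w) = 0`, then
`area(γ) = m·C(n,2) - n·des(w) + maj(w)`. -/
theorem stmt12 (n m : ℕ) (hm : 1 ≤ m) (g : List Step) (w : Fin n → Fin n)
    (hpark : IsParking n m g w) (hdinv : dinv n m g w = 0) :
    (∑ i ∈ Finset.range n, aLine m g i) =
      (m : ℤ) * n.choose 2 - n * desNum n w + majStat n w := by
  have hcount := sum_range_sum_range_ite_add_sum_filter n fun k => labOf w (k + 1) < labOf w k
  rw [← sum_congr rfl fun i hi => eBefore_eq_sum hm hpark hdinv i (mem_range.1 hi),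
    ← desNum_eq_card_filter, ← majStat_eq_sum_filter] at hcount
  have hgauss : ∑ i ∈ range n, i = n.choose 2 :=
    (sum_range_id n).trans (Nat.choose_two_right n).symm
  simp only [aLine, sum_sub_distrib, ← mul_sum]
  rw [← Nat.cast_sum, ← Nat.cast_sum, hgauss]
  have hcount_int : ((∑ i ∈ range n, eBefore g i : ℕ) : ℤ) + majStat n w = n * desNum n w := by
    exact_mod_cast hcount
  linear_combination -hcount_int
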